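/- Let σ(x) = 1/(1+e^{-x}) be the sigmoid function, let α ∈ ℝ, let τ > 0, and let U be uniformly distributed on (0,1). Define G(α,τ) = σ((α + log U − log(1−U))/τ). Then for every ε ∈ (0,1/2), (1 − σ(α)) − (τ/4)·log(1/ε) ≤ P(G(α,τ) ≤ ε) ≤ 1 − σ(α). -/

import Mathlib

/-!
With `logit u = log u - log (1 - u)`, the inverse of the sigmoid on `(0, 1)`, the event
`G(α, τ) ≤ ε` is `logit U ≤ τ · logit ε - α`, i.e. `U ≤ σ(τ · logit ε - α)`, so its probability is
exactly `σ(τ · logit ε - α)`. For `ε < 1/2` we have `logit ε ≤ 0`, which gives the upper bound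
`σ(-α) = 1 - σ(α)`; the lower bound holds because `σ' = σ (1 - σ) ≤ 1/4` and
`-logit ε ≤ log (1/ε)`.
-/

open MeasureTheory Real

/-- The sigmoid function σ(x) = 1/(1+e^{-x}). -/
noncomputable def sigmoid (x : ℝ) : ℝ := 1 / (1 + Real.exp (-x))

theorem sigmoid_eq_real_sigmoid : _root_.sigmoid = Real.sigmoid := by
  ext x
  rw [_root_.sigmoid, Real.sigmoid_def, one_div]

namespace Real

noncomputable def logit (u : ℝ) : ℝ := log u - log (1 - u)

theorem sigmoid_logit {u : ℝ} (hu : u ∈ Set.Ioo (0 : ℝ) 1) : Real.sigmoid (logit u) = u := by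
  obtain ⟨hu0, hu1⟩ := hu
  have h1u : 0 < 1 - u := by linarith
  rw [Real.sigmoid_def, logit, neg_sub, ← log_div h1u.ne' hu0.ne', exp_log (div_pos h1u hu0)]
  field_simp
  ring

theorem logit_le_iff_le_sigmoid {u x : ℝ} (hu : u ∈ Set.Ioo (0 : ℝ) 1) :
    logit u ≤ x ↔ u ≤ Real.sigmoid x := by
  conv_rhs => rw [← sigmoid_logit hu]
  exact Real.sigmoid_le_iff.symm

theorem sigmoid_le_iff_le_logit {x ε : ℝ} (hε : ε ∈ Set.Ioo (0 : ℝ) 1) :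
    Real.sigmoid x ≤ ε ↔ x ≤ logit ε := by
  conv_lhs => rw [← sigmoid_logit hε]
  exact Real.sigmoid_le_iff

theorem logit_nonpos {ε : ℝ} (hε0 : 0 < ε) (hε : ε ≤ 1 / 2) : logit ε ≤ 0 := by
  rw [logit, sub_nonpos]
  exact log_le_log hε0 (by linarith)

theorem neg_logit_le_log_one_div {ε : ℝ} (hε : ε ∈ Set.Ioo (0 : ℝ) 1) :
    -logit ε ≤ log (1 / ε) := by
  obtain ⟨hε0, hε1⟩ := hε
  have : log (1 - ε) ≤ 0 := log_nonpos (by linarith) (by linarith)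
  rw [logit, one_div, log_inv]
  linarith

theorem deriv_sigmoid_le (x : ℝ) : deriv Real.sigmoid x ≤ 1 / 4 := by
  rw [Real.deriv_sigmoid]
  nlinarith [sq_nonneg (Real.sigmoid x - 1 / 2)]

theorem sigmoid_sub_sigmoid_le {x y : ℝ} (hxy : x ≤ y) :
    Real.sigmoid y - Real.sigmoid x ≤ (y - x) / 4 := by
  have hdiff : Differentiable ℝ Real.sigmoid := fun z =>
    (Real.hasDerivAt_sigmoid z).differentiableAt
  linarith [image_sub_le_mul_sub_of_deriv_le hdiff deriv_sigmoid_le hxy]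

end Real

noncomputable def concreteRelaxation (α τ u : ℝ) : ℝ := Real.sigmoid ((α + logit u) / τ)

theorem setOf_concreteRelaxation_le_inter_Ioo {α τ ε : ℝ} (hτ : 0 < τ)
    (hε : ε ∈ Set.Ioo (0 : ℝ) 1) :
    {u : ℝ | concreteRelaxation α τ u ≤ ε} ∩ Set.Ioo 0 1 =
      Set.Ioc 0 (Real.sigmoid (τ * logit ε - α)) := by
  ext u
  simp only [concreteRelaxation, Set.mem_inter_iff, Set.mem_ofPred_eq, Set.mem_Ioo, Set.mem_Ioc]
  constructor
  · rintro ⟨h, hu0, hu1⟩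
    refine ⟨hu0, (logit_le_iff_le_sigmoid ⟨hu0, hu1⟩).1 ?_⟩
    rw [sigmoid_le_iff_le_logit hε, div_le_iff₀ hτ] at h
    linarith
  · rintro ⟨hu0, hu⟩
    have hu1 : u < 1 := hu.trans_lt (Real.sigmoid_lt_one _)
    refine ⟨?_, hu0, hu1⟩
    rw [sigmoid_le_iff_le_logit hε, div_le_iff₀ hτ]
    linarith [(logit_le_iff_le_sigmoid ⟨hu0, hu1⟩).2 hu]

theorem volume_restrict_Ioo_concreteRelaxation_le {α τ ε : ℝ} (hτ : 0 < τ)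
    (hε : ε ∈ Set.Ioo (0 : ℝ) 1) :
    volume.restrict (Set.Ioo (0 : ℝ) 1) {u | concreteRelaxation α τ u ≤ ε} =
      ENNReal.ofReal (Real.sigmoid (τ * logit ε - α)) := by
  rw [Measure.restrict_apply' measurableSet_Ioo, setOf_concreteRelaxation_le_inter_Ioo hτ hε,
    Real.volume_Ioc, sub_zero]

/-- For U uniform on (0,1) and G(α,τ) = σ((α + log U − log(1−U))/τ),
    for every ε ∈ (0,1/2), (1 − σ(α)) − (τ/4)·log(1/ε) ≤ P(G(α,τ) ≤ ε) ≤ 1 − σ(α). -/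
theorem gumbel_lower_tail_bounds (α τ ε : ℝ) (hτ : 0 < τ)
    (hε : ε ∈ Set.Ioo (0:ℝ) (1/2)) :
    ENNReal.ofReal ((1 - _root_.sigmoid α) - τ / 4 * Real.log (1/ε)) ≤
      (volume.restrict (Set.Ioo (0:ℝ) 1))
        {u : ℝ | _root_.sigmoid ((α + Real.log u - Real.log (1 - u)) / τ) ≤ ε} ∧
    (volume.restrict (Set.Ioo (0:ℝ) 1))
        {u : ℝ | _root_.sigmoid ((α + Real.log u - Real.log (1 - u)) / τ) ≤ ε}
      ≤ ENNReal.ofReal (1 - _root_.sigmoid α) := by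
  obtain ⟨hε0, hε⟩ := hε
  have hε1 : ε ∈ Set.Ioo (0 : ℝ) 1 := ⟨hε0, by linarith⟩
  simp only [sigmoid_eq_real_sigmoid, add_sub_assoc, ← logit.eq_1, ← concreteRelaxation.eq_1,
    ← Real.sigmoid_neg]
  rw [volume_restrict_Ioo_concreteRelaxation_le hτ hε1]
  have hτlogit : τ * logit ε ≤ 0 := mul_nonpos_of_nonneg_of_nonpos hτ.le (logit_nonpos hε0 hε.le)
  have hgap := sigmoid_sub_sigmoid_le (x := τ * logit ε - α) (y := -α) (by linarith)
  have hlog := mul_le_mul_of_nonneg_left (neg_logit_le_log_one_div hε1) hτ.le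
  constructor
  · exact ENNReal.ofReal_le_ofReal (by linarith)
  · exact ENNReal.ofReal_le_ofReal (Real.sigmoid_monotone (by linarith))
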